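/- arXiv:2306.16659 — 2 statements merged into one kernel-verified Lean document; each statement's English description precedes it below -/
import Mathlib

section
/- Let a, b > 0 with 0 ≤ 1 − a − 2b ≤ 1. Define u_m = 1 + (1 − (1−a−2b)^m)/(1 + 2b/a) and v_m = 1/2 + (1/2 + (b/a)(1−a−2b)^m)/(1 + 2b/a) for m ≥ 0. Then 2v_m − u_m ≥ 0 and 2u_m − v_m ≥ 1, and consequently (2/5)(u_m² + v_m²) ≤ u_m·v_m. -/
/-- The key inequality (2/5)(u_m² + v_m²) ≤ u_m v_m via 2v_m − u_m ≥ 0 and 2u_m − v_m ≥ 1. -/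
theorem modified_circuit_weight_bound (a b : ℝ) (ha : 0 < a) (hb : 0 < b)
    (h1 : 0 ≤ 1 - a - 2 * b) (h2 : 1 - a - 2 * b ≤ 1) (m : ℕ) :
    let u := 1 + (1 - (1 - a - 2 * b) ^ m) / (1 + 2 * b / a)
    let v := 1 / 2 + (1 / 2 + (b / a) * (1 - a - 2 * b) ^ m) / (1 + 2 * b / a)
    0 ≤ 2 * v - u ∧ 1 ≤ 2 * u - v ∧ (2 / 5) * (u ^ 2 + v ^ 2) ≤ u * v := by
  intro u v
  have hr0 : 0 ≤ (1 - a - 2 * b) ^ m := pow_nonneg h1 m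
  have hr1 : (1 - a - 2 * b) ^ m ≤ 1 := pow_le_one₀ h1 h2
  have hD : 0 < a + 2 * b := by linarith
  have ha' : a ≠ 0 := ne_of_gt ha
  have hu : u = 1 + (1 - (1 - a - 2 * b) ^ m) * a / (a + 2 * b) := by
    show (1:ℝ) + (1 - (1 - a - 2 * b) ^ m) / (1 + 2 * b / a) = _
    field_simp
  have hv : v = 1 / 2 + (1 / 2 + (b / a) * (1 - a - 2 * b) ^ m) * a / (a + 2 * b) := by
    show (1:ℝ) / 2 + (1 / 2 + (b / a) * (1 - a - 2 * b) ^ m) / (1 + 2 * b / a) = _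
    field_simp
  have h3 : 0 ≤ 2 * v - u := by
    rw [hu, hv]
    have : 2 * (1 / 2 + (1 / 2 + (b / a) * (1 - a - 2 * b) ^ m) * a / (a + 2 * b)) -
        (1 + (1 - (1 - a - 2 * b) ^ m) * a / (a + 2 * b)) = (1 - a - 2 * b) ^ m := by
      field_simp
      ring
    rw [this]; exact hr0
  have h4 : 1 ≤ 2 * u - v := by
    rw [hu, hv, ← sub_nonneg]
    have : 2 * (1 + (1 - (1 - a - 2 * b) ^ m) * a / (a + 2 * b)) -
        (1 / 2 + (1 / 2 + (b / a) * (1 - a - 2 * b) ^ m) * a / (a + 2 * b)) - 1 =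
        (1 - (1 - a - 2 * b) ^ m) * (2 * a + b) / (a + 2 * b) := by
      field_simp
      ring
    rw [this]
    exact div_nonneg (mul_nonneg (by linarith) (by linarith)) (le_of_lt hD)
  clear_value u v
  exact ⟨h3, h4, by nlinarith [mul_nonneg h3 (by linarith : (0:ℝ) ≤ 2 * u - v)]⟩
end

section
/- For q ∈ [0,1] and p ∈ [0,1], the inequality (1 − q²(1−p)²) · (q²(1−p)² + 3 − (1−p)²(3−q)(1−q)) / (3 − (1−p)²(3−q)(1−q)) < 1 holds if and only if q > 3/4 − 1/(2(1−p)²), provided p < 1, q > 0, and the denominator 3 − (1−p)²(3−q)(1−q) is positive. -/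
/-- Parameter condition for 4μη < 1 for the noise dep_p ∘ amp_q. -/
theorem four_mu_eta_lt_one_iff (p q : ℝ) (hp0 : 0 ≤ p) (hp1 : p < 1)
    (hq0 : 0 < q) (hq1 : q ≤ 1)
    (hden : 0 < 3 - (1 - p) ^ 2 * (3 - q) * (1 - q)) :
    (1 - q ^ 2 * (1 - p) ^ 2) *
        (q ^ 2 * (1 - p) ^ 2 + 3 - (1 - p) ^ 2 * (3 - q) * (1 - q)) /
        (3 - (1 - p) ^ 2 * (3 - q) * (1 - q)) < 1
      ↔ q > 3 / 4 - 1 / (2 * (1 - p) ^ 2) := by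
  have h1p : (0:ℝ) < 1 - p := by linarith
  have hu : (0:ℝ) < (1 - p) ^ 2 := pow_pos h1p 2
  have ha : (0:ℝ) < q ^ 2 * (1 - p) ^ 2 := mul_pos (pow_pos hq0 2) hu
  rw [gt_iff_lt, div_lt_one hden,
    show (3:ℝ) / 4 - 1 / (2 * (1 - p) ^ 2) = (3 * (1 - p) ^ 2 - 2) / (4 * (1 - p) ^ 2) by
      field_simp; ring,
    div_lt_iff₀ (by positivity)]
  constructor
  · intro h
    nlinarith [mul_pos ha ha, sq_nonneg (q * (1 - p)), mul_pos ha hden]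
  · intro h
    have h2 : (1:ℝ) < q ^ 2 * (1 - p) ^ 2 + (3 - (1 - p) ^ 2 * (3 - q) * (1 - q)) := by
      nlinarith
    nlinarith [mul_pos ha (by linarith :
      (0:ℝ) < q ^ 2 * (1 - p) ^ 2 + (3 - (1 - p) ^ 2 * (3 - q) * (1 - q)) - 1)]
end
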